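/- Let β ∈ (0,1) and let R_H > 0, R_L > 0 with R_H + R_L < 1 - β. For each S ∈ (0, 1-β) let ρ(S) denote the unique positive solution of E_0(ρ) = ρ·S, and write ρ_{HL} = ρ(R_H + R_L). Then sup_{R_L ≤ R' < 1-β-R_H} ρ(R_H + R')·R' = sup_{0 < ρ ≤ ρ_{HL}} ( E_0(ρ) - ρ·R_H ). -/

import Mathlib

/-- Base-2 Gallager function of the binary erasure channel with erasure probability `β`. -/
noncomputable def gallagerE0 (β ρ : ℝ) : ℝ := -Real.logb 2 (β + (1 - β) * 2 ^ (-ρ))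

/-!
`E_0` is strictly concave with `E_0(0) = 0` and `E_0'(0) = 1 - β`, so the chord slope
`ρ ↦ E_0(ρ)/ρ` is strictly decreasing on `(0, ∞)` with values below `1 - β`, and `ρ(·)` is
its inverse on `(0, 1 - β)`. Hence `R' ↦ ρ(R_H + R')` maps `[R_L, 1 - β - R_H)` bijectively
onto `(0, ρ_{HL}]`, with inverse `ρ ↦ E_0(ρ)/ρ - R_H`, and along it
`ρ(R_H + R')·R' = E_0(ρ) - ρ R_H`: the two sets under the suprema coincide.
-/

open Set

section SlopeInverse

variable {f r : ℝ → ℝ} {c : ℝ}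

lemma div_eq_of_apply_eq_mul (hr : ∀ S ∈ Ioo 0 c, 0 < r S ∧ f (r S) = r S * S)
    {S : ℝ} (hS : S ∈ Ioo 0 c) : f (r S) / r S = S := by
  obtain ⟨hpos, heq⟩ := hr S hS
  rw [heq, mul_div_cancel_left₀ _ hpos.ne']

theorem image_mul_eq_image_sub_of_strictAntiOn_div
    (hanti : StrictAntiOn (fun x => f x / x) (Ioi 0)) (hlt : ∀ x ∈ Ioi 0, f x / x < c)
    (hr : ∀ S ∈ Ioo 0 c, 0 < r S ∧ f (r S) = r S * S) {a b : ℝ} (hab : a + b ∈ Ioo 0 c) :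
    (fun t => r (a + t) * t) '' Ico b (c - a) = (fun ρ => f ρ - ρ * a) '' Ioc 0 (r (a + b)) := by
  have hrab : r (a + b) ∈ Ioi 0 := (hr _ hab).1
  ext y
  constructor
  · rintro ⟨t, ⟨hbt, htc⟩, rfl⟩
    have hS : a + t ∈ Ioo 0 c := ⟨by linarith [hab.1], by linarith⟩
    obtain ⟨hpos, heq⟩ := hr _ hS
    refine ⟨r (a + t), ⟨hpos, ?_⟩, by simp only [heq]; ring⟩
    rw [← hanti.le_iff_ge hrab hpos]
    simp only [div_eq_of_apply_eq_mul hr hS, div_eq_of_apply_eq_mul hr hab]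
    linarith
  · rintro ⟨ρ, ⟨hρ, hρle⟩, rfl⟩
    have hge : a + b ≤ f ρ / ρ := by
      simpa only [div_eq_of_apply_eq_mul hr hab] using hanti.antitoneOn hρ hrab hρle
    have hS : f ρ / ρ ∈ Ioo 0 c := ⟨by linarith [hab.1], hlt ρ hρ⟩
    have hrS : r (f ρ / ρ) = ρ :=
      hanti.injOn (hr _ hS).1 hρ (div_eq_of_apply_eq_mul hr hS)
    refine ⟨f ρ / ρ - a, ⟨by linarith, by linarith [hS.2]⟩, ?_⟩
    simp only [add_sub_cancel, hrS]
    field_simp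

end SlopeInverse

section Gallager

lemma gallagerE0_zero (β : ℝ) : gallagerE0 β 0 = 0 := by
  simp [gallagerE0]

variable {β : ℝ}

lemma hasDerivAt_gallagerE0 (hβ0 : 0 ≤ β) (hβ1 : β ≤ 1) (ρ : ℝ) :
    HasDerivAt (gallagerE0 β) ((1 - β) / (β * 2 ^ ρ + (1 - β))) ρ := by
  have h2 : 0 < (2 : ℝ) ^ ρ := by positivity
  have hden : 0 < β * 2 ^ ρ + (1 - β) := by
    nlinarith [mul_nonneg hβ0 (sq_nonneg ((2 : ℝ) ^ ρ)), mul_nonneg hβ0 h2.le]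
  have hpos : 0 < β + (1 - β) * (2 : ℝ) ^ (-ρ) := by
    rw [Real.rpow_neg zero_le_two, ← div_eq_mul_inv,
      show β + (1 - β) / 2 ^ ρ = (β * 2 ^ ρ + (1 - β)) / 2 ^ ρ by field_simp]
    positivity
  have h := ((((Real.hasStrictDerivAt_const_rpow two_pos (-ρ)).hasDerivAt.comp ρ
    (hasDerivAt_neg ρ)).const_mul (1 - β)).const_add β).log hpos.ne' |>.div_const
    (Real.log 2) |>.neg
  refine (h.congr_deriv ?_).congr_of_eventuallyEq (.of_forall fun x => ?_)
  · simp only [Function.comp_apply]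
    rw [Real.rpow_neg zero_le_two] at hpos ⊢
    field_simp
  · simp [gallagerE0, Real.logb]

lemma strictConcaveOn_gallagerE0 (hβ0 : 0 < β) (hβ1 : β < 1) :
    StrictConcaveOn ℝ univ (gallagerE0 β) := by
  have hderiv := hasDerivAt_gallagerE0 hβ0.le hβ1.le
  refine StrictAnti.strictConcaveOn_univ_of_deriv
    (continuous_iff_continuousAt.2 fun ρ => (hderiv ρ).continuousAt) fun x y hxy => ?_
  rw [(hderiv x).deriv, (hderiv y).deriv]
  have hx : 0 < (2 : ℝ) ^ x := by positivity
  have hxy' : (2 : ℝ) ^ x < 2 ^ y := Real.rpow_lt_rpow_of_exponent_lt one_lt_two hxy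
  apply div_lt_div_of_pos_left (by linarith) (by nlinarith)
  nlinarith

lemma strictAntiOn_gallagerE0_div (hβ0 : 0 < β) (hβ1 : β < 1) :
    StrictAntiOn (fun ρ => gallagerE0 β ρ / ρ) (Ioi 0) := fun x hx y hy hxy => by
  simpa [gallagerE0_zero] using
    (strictConcaveOn_gallagerE0 hβ0 hβ1).secant_strict_mono (mem_univ 0) (mem_univ x)
      (mem_univ y) (ne_of_gt hx) (ne_of_gt hy) hxy

lemma gallagerE0_div_lt (hβ0 : 0 < β) (hβ1 : β < 1) {ρ : ℝ} (hρ : 0 < ρ) :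
    gallagerE0 β ρ / ρ < 1 - β := by
  simpa [slope_def_field, gallagerE0_zero] using
    (strictConcaveOn_gallagerE0 hβ0 hβ1).slope_lt_of_hasDerivAt (mem_univ 0) (mem_univ ρ) hρ
      (hasDerivAt_gallagerE0 hβ0.le hβ1.le 0)

end Gallager

/-- Optimization-by-substitution step of Theorem 3.1: with `r S` the unique positive
solution of `E_0(ρ) = ρ S` for `S ∈ (0, 1-β)`, the optimized low-priority delay
exponent `sup_{R_L ≤ R' < 1-β-R_H} r(R_H+R')·R'` equals
`sup_{0 < ρ ≤ r(R_H+R_L)} (E_0(ρ) - ρ R_H)`. -/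
theorem low_priority_substitution (β RH RL : ℝ) (hβ : β ∈ Set.Ioo (0 : ℝ) 1)
    (hRH : 0 < RH) (hRL : 0 < RL) (hsum : RH + RL < 1 - β)
    (r : ℝ → ℝ)
    (hr : ∀ S ∈ Set.Ioo (0 : ℝ) (1 - β), 0 < r S ∧ gallagerE0 β (r S) = r S * S) :
    sSup ((fun R' => r (RH + R') * R') '' Set.Ico RL (1 - β - RH)) =
      sSup ((fun ρ => gallagerE0 β ρ - ρ * RH) '' Set.Ioc 0 (r (RH + RL))) := by
  obtain ⟨hβ0, hβ1⟩ := hβ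
  rw [image_mul_eq_image_sub_of_strictAntiOn_div (strictAntiOn_gallagerE0_div hβ0 hβ1)
    (fun _ hρ => gallagerE0_div_lt hβ0 hβ1 hρ) hr ⟨by linarith, hsum⟩]
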